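/- arXiv:1503.03394 — 8 statements merged into one kernel-verified Lean document; each statement's English description precedes it below -/
import Mathlib

section
/- Griesmer bound: if C is an F₂-linear subspace of F₂ⁿ of dimension k ≥ 1 all of whose nonzero codewords have Hamming weight at least d (with d ≥ 1), then n ≥ ∑_{i=0}^{k-1} ⌈d / 2^i⌉. -/
/-!
Puncture `C` on the support of a codeword `c` of minimum weight `w ≥ d`. Since
`wt x + wt (x + c) = w + 2 · wt (x off supp c)`, every codeword other than `0` and `c` keeps
weight at least `w / 2` off `supp c`. Hence the puncturing has kernel `{0, c}` on `C`, and the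
residual code has length `n - w`, dimension `k - 1` and minimum distance `≥ ⌈w / 2⌉`. Induction on
`k`, together with `⌈w / 2 ^ (i + 1)⌉ ≤ ⌈⌈w / 2⌉ / 2 ^ i⌉`, gives the bound.
-/

open Finset Module

namespace BinaryCode

variable {ι : Type*} [Fintype ι]

/-- `C.map (residualMap c)` is the residual code of `C` with respect to `c`. -/
def residualMap (c : ι → ZMod 2) : (ι → ZMod 2) →ₗ[ZMod 2] ({i // c i = 0} → ZMod 2) :=
  LinearMap.funLeft _ _ Subtype.val

omit [Fintype ι] in
lemma residualMap_self (c : ι → ZMod 2) : residualMap c c = 0 := funext fun j ↦ j.2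

lemma hammingNorm_residualMap (c x : ι → ZMod 2) :
    hammingNorm (residualMap c x) = #{i | c i = 0 ∧ x i ≠ 0} := by
  rw [hammingNorm, ← Fintype.card_subtype, ← Fintype.card_subtype]
  exact Fintype.card_congr (Equiv.subtypeSubtypeEquivSubtypeInter (c · = 0) (x · ≠ 0))

lemma card_subtype_eq_zero_add_hammingNorm (c : ι → ZMod 2) :
    Fintype.card {i // c i = 0} + hammingNorm c = Fintype.card ι := by
  rw [hammingNorm, ← Fintype.card_subtype, Fintype.card_subtype_compl]
  have := Fintype.card_subtype_le (c · = 0)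
  omega

lemma hammingNorm_add_hammingNorm_add (x c : ι → ZMod 2) :
    hammingNorm x + hammingNorm (x + c) = hammingNorm c + 2 * hammingNorm (residualMap c x) := by
  rw [hammingNorm_residualMap]
  simp only [hammingNorm, card_filter, mul_sum, ← sum_add_distrib]
  refine sum_congr rfl fun i _ ↦ ?_
  have coordinatewise : ∀ a b : ZMod 2, ((if a ≠ 0 then 1 else 0) + if a + b ≠ 0 then 1 else 0) =
      (if b ≠ 0 then 1 else 0) + 2 * if b = 0 ∧ a ≠ 0 then 1 else 0 := by decide
  exact coordinatewise (x i) (c i)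

lemma exists_mem_ne_zero_forall_hammingNorm_le {C : Submodule (ZMod 2) (ι → ZMod 2)}
    (hC : C ≠ ⊥) : ∃ c ∈ C, c ≠ 0 ∧ ∀ x ∈ C, x ≠ 0 → hammingNorm c ≤ hammingNorm x := by
  obtain ⟨x, hx, hx₀⟩ := (Submodule.ne_bot_iff C).1 hC
  obtain ⟨c, ⟨hc, hc₀⟩, hle⟩ :=
    Set.exists_min_image {x | x ∈ C ∧ x ≠ 0} hammingNorm (Set.toFinite _) ⟨x, hx, hx₀⟩
  exact ⟨c, hc, hc₀, fun y hy hy₀ ↦ hle y ⟨hy, hy₀⟩⟩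

section MinimumWeight

variable {C : Submodule (ZMod 2) (ι → ZMod 2)} {c : ι → ZMod 2} (hc : c ∈ C)
  (hmin : ∀ x ∈ C, x ≠ 0 → hammingNorm c ≤ hammingNorm x)
include hc hmin

lemma hammingNorm_le_two_mul_hammingNorm_residualMap {x : ι → ZMod 2} (hx : x ∈ C)
    (hx₀ : x ≠ 0) (hxc : x ≠ c) : hammingNorm c ≤ 2 * hammingNorm (residualMap c x) := by
  have hxc₀ : x + c ≠ 0 := by
    rwa [Ne, add_eq_zero_iff_eq_neg, ZModModule.neg_eq_self]
  have := hmin x hx hx₀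
  have := hmin (x + c) (C.add_mem hx hc) hxc₀
  have := hammingNorm_add_hammingNorm_add x c
  omega

lemma ker_residualMap_domRestrict (hc₀ : c ≠ 0) :
    LinearMap.ker ((residualMap c).domRestrict C) = Submodule.span (ZMod 2) {⟨c, hc⟩} := by
  refine le_antisymm ?_ ?_
  · rintro ⟨x, hx⟩ hker
    have hres : residualMap c x = 0 := hker
    by_cases hx₀ : x = 0
    · subst hx₀
      exact Submodule.zero_mem _
    by_cases hxc : x = c
    · exact Submodule.subset_span (Subtype.ext hxc)
    have := hammingNorm_le_two_mul_hammingNorm_residualMap hc hmin hx hx₀ hxc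
    rw [hres, hammingNorm_zero, mul_zero, Nat.le_zero, hammingNorm_eq_zero] at this
    exact absurd this hc₀
  · rw [Submodule.span_le, Set.singleton_subset_iff]
    exact residualMap_self c

lemma finrank_map_residualMap_add_one (hc₀ : c ≠ 0) :
    finrank (ZMod 2) (C.map (residualMap c)) + 1 = finrank (ZMod 2) C := by
  have := LinearMap.finrank_range_add_finrank_ker ((residualMap c).domRestrict C)
  rwa [LinearMap.range_domRestrict, ker_residualMap_domRestrict hc hmin hc₀,
    finrank_span_singleton (by simpa using hc₀)] at this

lemma ceil_half_le_hammingNorm_of_mem_map_residualMap {y : {i // c i = 0} → ZMod 2}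
    (hy : y ∈ C.map (residualMap c)) (hy₀ : y ≠ 0) : ⌈(hammingNorm c : ℚ) / 2⌉₊ ≤ hammingNorm y := by
  obtain ⟨x, hx, rfl⟩ := hy
  have hx₀ : x ≠ 0 := by rintro rfl; exact hy₀ (map_zero _)
  have hxc : x ≠ c := by rintro rfl; exact hy₀ (residualMap_self x)
  have := hammingNorm_le_two_mul_hammingNorm_residualMap hc hmin hx hx₀ hxc
  rw [Nat.ceil_le, div_le_iff₀ two_pos]
  exact_mod_cast by omega

end MinimumWeight

def griesmerSum (d k : ℕ) : ℕ := ∑ i ∈ range k, ⌈(d : ℚ) / 2 ^ i⌉₊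

lemma griesmerSum_mono {d w : ℕ} (h : d ≤ w) (k : ℕ) : griesmerSum d k ≤ griesmerSum w k := by
  unfold griesmerSum
  gcongr

lemma griesmerSum_succ_le (w k : ℕ) :
    griesmerSum w (k + 1) ≤ w + griesmerSum ⌈(w : ℚ) / 2⌉₊ k := by
  rw [griesmerSum, sum_range_succ', pow_zero, div_one, Nat.ceil_natCast, add_comm, griesmerSum]
  refine add_le_add le_rfl (sum_le_sum fun i _ ↦ Nat.ceil_le_ceil ?_)
  rw [pow_succ', ← div_div]
  gcongr
  exact Nat.le_ceil _

theorem griesmerSum_le_card (C : Submodule (ZMod 2) (ι → ZMod 2)) {k d : ℕ}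
    (hdim : finrank (ZMod 2) C = k) (hmin : ∀ c ∈ C, c ≠ 0 → d ≤ hammingNorm c) :
    griesmerSum d k ≤ Fintype.card ι := by
  induction k generalizing ι d with
  | zero => simp [griesmerSum]
  | succ k ih =>
    obtain ⟨c, hc, hc₀, hcmin⟩ :=
      exists_mem_ne_zero_forall_hammingNorm_le (C := C) (by rintro rfl; simp at hdim)
    have hres := ih (C.map (residualMap c))
      (by have := finrank_map_residualMap_add_one hc hcmin hc₀; omega)
      (fun y hy hy₀ ↦ ceil_half_le_hammingNorm_of_mem_map_residualMap hc hcmin hy hy₀)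
    calc griesmerSum d (k + 1)
        ≤ griesmerSum (hammingNorm c) (k + 1) := griesmerSum_mono (hmin c hc hc₀) _
      _ ≤ hammingNorm c + griesmerSum ⌈(hammingNorm c : ℚ) / 2⌉₊ k := griesmerSum_succ_le _ _
      _ ≤ hammingNorm c + Fintype.card {i // c i = 0} := by gcongr
      _ = Fintype.card ι := by rw [add_comm, card_subtype_eq_zero_add_hammingNorm]

end BinaryCode

theorem griesmer_bound_general {n k d : ℕ}
    (C : Submodule (ZMod 2) (Fin n → ZMod 2))
    (hdim : Module.finrank (ZMod 2) C = k)
    (hmin : ∀ c ∈ C, c ≠ 0 → d ≤ hammingNorm c) :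
    n ≥ ∑ i ∈ Finset.range k, ⌈(d : ℚ) / 2 ^ i⌉₊ := by
  simpa [BinaryCode.griesmerSum] using BinaryCode.griesmerSum_le_card C hdim hmin

/-- Griesmer bound: if `C` is a binary linear code of length `n`, dimension `k ≥ 1`,
all of whose nonzero codewords have Hamming weight at least `d ≥ 1`, then
`n ≥ ∑_{i=0}^{k-1} ⌈d / 2^i⌉`. -/
theorem griesmer_bound {n k d : ℕ}
    (C : Submodule (ZMod 2) (Fin n → ZMod 2))
    (hdim : Module.finrank (ZMod 2) C = k) (hk : 1 ≤ k) (hd : 1 ≤ d)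
    (hmin : ∀ c ∈ C, c ≠ 0 → d ≤ hammingNorm c) :
    n ≥ ∑ i ∈ Finset.range k, ⌈(d : ℚ) / 2 ^ i⌉₊ :=
  griesmer_bound_general C hdim hmin
end

section
/- MacWilliams equations: let F be a finite field with q elements and let C be an F-linear subspace of Fⁿ. Let C^⊥ = {x ∈ Fⁿ : ∑_{i} x_i·c_i = 0 for all c ∈ C} be the dual code with respect to the standard dot product, and for a code D let A_i(D) denote the number of codewords of D of Hamming weight i. Then for every j with 0 ≤ j ≤ n: |C| · A_j(C^⊥) = ∑_{i=0}^{n} K_j^{n,q}(i) · A_i(C), where K_j^{n,q}(x) = ∑_{l=0}^{j} (−1)^l (q−1)^{j−l} · binom(x, l) · binom(n−x, j−l) is the Krawtchouk polynomial (here binom denotes the binomial coefficient, evaluated at the integer x). -/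
/-- The number of codewords of Hamming weight `i` in a code `D ⊆ Fⁿ`. -/
noncomputable def weightCount {F : Type*} [Fintype F] [DecidableEq F] [Zero F] {n : ℕ}
    (D : Set (Fin n → F)) (i : ℕ) : ℕ :=
  Nat.card {x : Fin n → F // x ∈ D ∧ hammingNorm x = i}

/-- The dual code of `C ⊆ Fⁿ` with respect to the standard dot product, as a set. -/
def dualCode {F : Type*} [CommRing F] {n : ℕ} (C : Submodule F (Fin n → F)) :
    Set (Fin n → F) :=
  {x : Fin n → F | ∀ c ∈ C, ∑ i, x i * c i = 0}

/-- The Krawtchouk polynomial `K_j^{n,q}` evaluated at the integer `i`. -/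
def krawtchouk (n q j i : ℕ) : ℤ :=
  ∑ l ∈ Finset.range (j + 1),
    (-1) ^ l * ((q : ℤ) - 1) ^ (j - l) * (i.choose l : ℤ) * ((n - i).choose (j - l) : ℤ)

/-!
Fix a primitive additive character `ψ` of `F`. By orthogonality, `∑_{c ∈ C} ψ(x ⬝ c)` equals
`|C|` when `x ∈ C^⊥` and `0` otherwise, so `|C| · A_j(C^⊥) = ∑_{c ∈ C} ∑_{wt x = j} ψ(x ⬝ c)`.
The inner sum depends only on the weight of `c`: on the vectors with a fixed support `S` it
factorises over the coordinates into `(q - 1)^|S \ supp c| · (-1)^|S ∩ supp c|`, and counting the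
`j`-sets `S` that meet `supp c` in `l` points turns the sum over `S` into `K_j(wt c)`.
-/

open Finset

namespace AddChar

lemma map_sum_eq_prod {A M : Type*} [AddCommMonoid A] [CommMonoid M] (ψ : AddChar A M)
    {ι : Type*} (s : Finset ι) (f : ι → A) :
    ψ (∑ i ∈ s, f i) = ∏ i ∈ s, ψ (f i) := by
  induction s using Finset.cons_induction <;> simp [map_add_eq_mul, *]

lemma sum_erase_zero_mul {R M : Type*} [CommRing R] [Fintype R] [DecidableEq R] [CommRing M]
    [IsDomain M] {ψ : AddChar R M} (hψ : ψ.IsPrimitive) (c : R) :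
    ∑ a ∈ univ.erase 0, ψ (a * c) = if c = 0 then (Fintype.card R : M) - 1 else -1 := by
  rw [sum_erase_eq_sub (mem_univ 0), sum_mulShift c hψ]
  split_ifs <;> simp

end AddChar

lemma filter_support_eq_piFinset {ι M : Type*} [Fintype ι] [DecidableEq ι] [Zero M] [Fintype M]
    [DecidableEq M] (S : Finset ι) :
    ({x : ι → M | ({i | x i ≠ 0} : Finset ι) = S} : Finset _) =
      Fintype.piFinset fun i => if i ∈ S then univ.erase 0 else {0} := by
  ext x
  simp only [mem_filter, mem_univ, true_and, Fintype.mem_piFinset, Finset.ext_iff]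
  refine forall_congr' fun i => ?_
  split_ifs <;> simp [*]

lemma card_powersetCard_filter_card_inter {α : Type*} [Fintype α] [DecidableEq α] (T : Finset α)
    {j l : ℕ} (hl : l ≤ j) :
    #{S ∈ powersetCard j univ | #(S ∩ T) = l} =
      (#T).choose l * (Fintype.card α - #T).choose (j - l) := by
  have split {A B : Finset α} (hA : A ⊆ T) (hB : B ⊆ Tᶜ) :
      (A ∪ B) ∩ T = A ∧ (A ∪ B) \ T = B := by
    constructor <;> ext x <;> grind [mem_compl]
  rw [← card_powersetCard, ← card_compl, ← card_powersetCard, ← card_product]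
  refine card_nbij' (fun S => (S ∩ T, S \ T)) (fun p => p.1 ∪ p.2) ?_ ?_ ?_ ?_
  · intro S hS
    simp only [coe_filter, mem_powersetCard, Set.mem_ofPred_eq, mem_coe, mem_product] at hS ⊢
    have := card_inter_add_card_sdiff S T
    exact ⟨⟨inter_subset_right, hS.2⟩, fun x hx => mem_compl.2 (mem_sdiff.1 hx).2, by omega⟩
  · rintro ⟨A, B⟩ h
    simp only [coe_filter, mem_powersetCard, Set.mem_ofPred_eq, mem_coe, mem_product] at h ⊢
    obtain ⟨hAT, hBT⟩ := split h.1.1 h.2.1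
    have := card_inter_add_card_sdiff (A ∪ B) T
    rw [hAT, hBT] at this
    exact ⟨⟨subset_univ _, by omega⟩, by rw [hAT, h.1.2]⟩
  · intro S _
    exact sup_inf_sdiff S T
  · rintro ⟨A, B⟩ h
    simp only [mem_coe, mem_product, mem_powersetCard] at h
    obtain ⟨hAT, hBT⟩ := split h.1.1 h.2.1
    simp [hAT, hBT]

section CharacterSums

variable {R M : Type*} [CommRing R] [Fintype R] [CommRing M] [IsDomain M] {ψ : AddChar R M}

lemma sum_addChar_dotProduct_mem_submodule {n : ℕ} (hψ : ψ.IsPrimitive)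
    (C : Submodule R (Fin n → R)) [DecidablePred (· ∈ C)] (x : Fin n → R)
    [Decidable (x ∈ dualCode C)] :
    ∑ c with c ∈ C, ψ (x ⬝ᵥ c) = if x ∈ dualCode C then (Nat.card C : M) else 0 := by
  rw [sum_subtype _ fun c => mem_filter_univ c]
  split_ifs with hx
  · simp_rw [show ∀ c : C, x ⬝ᵥ c = 0 from fun c => hx c c.2]
    simp [Nat.card_eq_fintype_card]
  · obtain ⟨c₀, hc₀, hxc₀⟩ : ∃ c ∈ C, x ⬝ᵥ c ≠ 0 := by simpa [dualCode, dotProduct] using hx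
    obtain ⟨t, ht⟩ := AddChar.ne_one_iff.1 (hψ hxc₀)
    let φ : C →+ R := AddMonoidHom.mk' (fun c => x ⬝ᵥ c) fun a b => dotProduct_add x a b
    refine AddChar.sum_eq_zero_of_ne_one (ψ := ψ.compAddMonoidHom φ) fun h => ht ?_
    simpa [φ, mul_comm] using DFunLike.congr_fun h ⟨t • c₀, C.smul_mem t hc₀⟩

variable [DecidableEq R] {ι : Type*} [Fintype ι] [DecidableEq ι]

lemma sum_addChar_dotProduct_of_support_eq (hψ : ψ.IsPrimitive) (c : ι → R) (S : Finset ι) :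
    ∑ x : ι → R with ({i | x i ≠ 0} : Finset ι) = S, ψ (x ⬝ᵥ c) =
      ((Fintype.card R : M) - 1) ^ #(S \ ({i | c i ≠ 0} : Finset ι)) *
        (-1) ^ #(S ∩ ({i | c i ≠ 0} : Finset ι)) := by
  have factor (i : ι) : ∑ a ∈ (if i ∈ S then univ.erase 0 else {0}), ψ (a * c i) =
      if i ∈ S then (if c i = 0 then (Fintype.card R : M) - 1 else -1) else 1 := by
    split_ifs with _ hc
    · rw [AddChar.sum_erase_zero_mul hψ, if_pos hc]
    · rw [AddChar.sum_erase_zero_mul hψ, if_neg hc]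
    · simp
  simp only [filter_support_eq_piFinset, dotProduct, AddChar.map_sum_eq_prod]
  rw [← prod_univ_sum _ fun i a => ψ (a * c i)]
  simp only [factor, prod_ite_mem, univ_inter, prod_ite, prod_const]
  congr 3 <;> ext i <;> simp

lemma sum_addChar_dotProduct_hammingNorm_eq (hψ : ψ.IsPrimitive) (j : ℕ) (c : ι → R) :
    ∑ x : ι → R with hammingNorm x = j, ψ (x ⬝ᵥ c) =
      krawtchouk (Fintype.card ι) (Fintype.card R) j (hammingNorm c) := by
  set T : Finset ι := {i | c i ≠ 0}
  have card_sdiff_eq {S : Finset ι} (hS : S ∈ powersetCard j univ) :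
      #(S \ T) = j - #(S ∩ T) := by
    rw [card_sdiff, inter_comm, (mem_powersetCard.1 hS).2]
  calc ∑ x : ι → R with hammingNorm x = j, ψ (x ⬝ᵥ c)
      = ∑ S ∈ powersetCard j univ,
          ∑ x : ι → R with ({i | x i ≠ 0} : Finset ι) = S, ψ (x ⬝ᵥ c) := by
        rw [sum_fiberwise_eq_sum_filter]
        simp [hammingNorm]
    _ = ∑ S ∈ powersetCard j univ,
          ((Fintype.card R : M) - 1) ^ (j - #(S ∩ T)) * (-1) ^ #(S ∩ T) :=
        sum_congr rfl fun S hS => by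
          rw [sum_addChar_dotProduct_of_support_eq hψ, card_sdiff_eq hS]
    _ = ∑ l ∈ range (j + 1), ∑ S ∈ powersetCard j univ with #(S ∩ T) = l,
          ((Fintype.card R : M) - 1) ^ (j - l) * (-1) ^ l := by
        refine (sum_fiberwise_of_maps_to' (g := fun S => #(S ∩ T)) (fun S hS => ?_)
          fun l => ((Fintype.card R : M) - 1) ^ (j - l) * (-1) ^ l).symm
        have := card_le_card (inter_subset_left : S ∩ T ⊆ S)
        rw [(mem_powersetCard.1 hS).2] at this
        exact mem_range_succ_iff.2 this
    _ = krawtchouk (Fintype.card ι) (Fintype.card R) j (hammingNorm c) := by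
        rw [krawtchouk]
        push_cast
        refine sum_congr rfl fun l hl => ?_
        rw [sum_const, card_powersetCard_filter_card_inter T (mem_range_succ_iff.1 hl)]
        simp only [nsmul_eq_mul, Nat.cast_mul, hammingNorm]
        ring

end CharacterSums

section WeightCount

variable {F : Type*} [Fintype F] [DecidableEq F] [Zero F] {n : ℕ}

lemma weightCount_eq_card_filter (D : Set (Fin n → F)) [DecidablePred (· ∈ D)] (i : ℕ) :
    weightCount D i = #{x | x ∈ D ∧ hammingNorm x = i} := by
  rw [weightCount, Nat.card_eq_fintype_card, Fintype.card_subtype]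

lemma sum_hammingNorm_eq_sum_weightCount {A : Type*} [AddCommMonoid A] (D : Set (Fin n → F))
    [DecidablePred (· ∈ D)] (f : ℕ → A) :
    ∑ x with x ∈ D, f (hammingNorm x) = ∑ i ∈ range (n + 1), weightCount D i • f i := by
  have hwt (x : Fin n → F) (_ : x ∈ ({x | x ∈ D} : Finset _)) : hammingNorm x ∈ range (n + 1) :=
    mem_range_succ_iff.2 (hammingNorm_le_card_fintype.trans_eq (Fintype.card_fin n))
  rw [← sum_fiberwise_of_maps_to' hwt]
  refine sum_congr rfl fun i _ => ?_
  rw [sum_const, filter_filter, weightCount_eq_card_filter]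

end WeightCount

theorem card_mul_weightCount_dualCode {R M : Type*} [CommRing R] [Fintype R] [DecidableEq R]
    [CommRing M] [IsDomain M] {ψ : AddChar R M} (hψ : ψ.IsPrimitive) {n : ℕ}
    (C : Submodule R (Fin n → R)) (j : ℕ) :
    (Nat.card C : M) * weightCount (dualCode C) j =
      ∑ i ∈ range (n + 1),
        (krawtchouk n (Fintype.card R) j i : M) * weightCount (C : Set (Fin n → R)) i := by
  classical
  calc (Nat.card C : M) * weightCount (dualCode C) j
      = ∑ x : Fin n → R with hammingNorm x = j,
          if x ∈ dualCode C then (Nat.card C : M) else 0 := by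
        rw [sum_ite, sum_const_zero, add_zero, sum_const, filter_filter, nsmul_eq_mul, mul_comm,
          weightCount_eq_card_filter]
        simp_rw [and_comm]
    _ = ∑ x : Fin n → R with hammingNorm x = j, ∑ c with c ∈ C, ψ (x ⬝ᵥ c) := by
        simp only [sum_addChar_dotProduct_mem_submodule hψ]
    _ = ∑ c with c ∈ C, (krawtchouk n (Fintype.card R) j (hammingNorm c) : M) := by
        rw [sum_comm]
        simp only [sum_addChar_dotProduct_hammingNorm_eq hψ, Fintype.card_fin]
    _ = _ := by
        refine (sum_hammingNorm_eq_sum_weightCount (C : Set (Fin n → R))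
          fun i => (krawtchouk n (Fintype.card R) j i : M)).trans ?_
        simp only [nsmul_eq_mul, mul_comm]

theorem macwilliams_equations_general {F : Type*} [Field F] [Fintype F] [DecidableEq F]
    {n q : ℕ} (hq : q = Fintype.card F)
    (C : Submodule F (Fin n → F)) (j : ℕ) :
    (Nat.card C : ℤ) * (weightCount (dualCode C) j : ℤ) =
      ∑ i ∈ Finset.range (n + 1), krawtchouk n q j i * (weightCount (C : Set (Fin n → F)) i : ℤ) := by
  subst hq
  exact_mod_cast card_mul_weightCount_dualCode
    (AddChar.FiniteField.primitiveChar_to_Complex_isPrimitive F) C j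

/-- MacWilliams equations: for a linear code `C ⊆ Fⁿ` over a finite field `F` with `q`
elements and every `0 ≤ j ≤ n`,
`|C| · A_j(C^⊥) = ∑_{i=0}^{n} K_j^{n,q}(i) · A_i(C)`. -/
theorem macwilliams_equations {F : Type*} [Field F] [Fintype F] [DecidableEq F]
    {n q : ℕ} (hq : q = Fintype.card F)
    (C : Submodule F (Fin n → F)) (j : ℕ) (hj : j ≤ n) :
    (Nat.card C : ℤ) * (weightCount (dualCode C) j : ℤ) =
      ∑ i ∈ Finset.range (n + 1), krawtchouk n q j i * (weightCount (C : Set (Fin n → F)) i : ℤ) :=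
  macwilliams_equations_general hq C j
end

section
/- The Gray map is an isometry from (ℤ₄ⁿ, Lee distance) to (F₂^{2n}, Hamming distance): for all x, y ∈ ℤ₄ⁿ, the Hamming distance between ψ(x) and ψ(y) equals the Lee distance between x and y. -/
/-- The Lee weight on `ZMod 4`: `w(0) = 0`, `w(1) = 1`, `w(2) = 2`, `w(3) = 1`. -/
def leeWt (a : ZMod 4) : ℕ := min a.val (4 - a.val)

/-- The Lee weight of a vector in `ZMod 4`ⁿ. -/
def leeWeight {n : ℕ} (x : Fin n → ZMod 4) : ℕ := ∑ i, leeWt (x i)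

/-- The Gray map on a single symbol: `0 ↦ (0,0)`, `1 ↦ (1,0)`, `2 ↦ (1,1)`, `3 ↦ (0,1)`. -/
def grayBit (a : ZMod 4) : Fin 2 → ZMod 2 :=
  ![if a = 1 ∨ a = 2 then 1 else 0, if a = 2 ∨ a = 3 then 1 else 0]

/-- The componentwise Gray map `ψ : ZMod 4ⁿ → ZMod 2^{2n}`. -/
def grayMap {n : ℕ} (x : Fin n → ZMod 4) : Fin n × Fin 2 → ZMod 2 :=
  fun p => grayBit (x p.1) p.2

lemma grayBit_dist (a b : ZMod 4) : hammingDist (grayBit a) (grayBit b) = leeWt (a - b) := by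
  revert a b; decide

/-- The Gray map is an isometry from `(ZMod 4ⁿ, Lee distance)` to
`(ZMod 2^{2n}, Hamming distance)`. -/
theorem grayMap_isometry {n : ℕ} (x y : Fin n → ZMod 4) :
    hammingDist (grayMap x) (grayMap y) = leeWeight (x - y) := by
  unfold hammingDist leeWeight
  rw [Finset.card_filter, Fintype.sum_prod_type]
  refine Finset.sum_congr rfl fun i _ => ?_
  rw [Pi.sub_apply, ← grayBit_dist (x i) (y i), hammingDist, Finset.card_filter]
  rfl
end

section
/- Exclusion of the large weights: let C be a 12-dimensional F₂-linear subspace of F₂^{1988} such that every nonzero codeword of C has Hamming weight in the set S = {992, 1008, 1024, 1056, 1088, 1152, 1216, 1280, 1344, 1984, 1986, 1988} and such that C has a basis consisting of codewords of Hamming weight exactly 992. Then no codeword of C has Hamming weight 1984, 1986 or 1988; that is, every nonzero codeword of C has Hamming weight in {992, 1008, 1024, 1056, 1088, 1152, 1216, 1280, 1344}. -/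
/-!
Suppose a codeword `c` has weight at least 1984. Over `𝔽₂`,
`wt (c + x) + wt c + wt x = 2 * #(supp c ∪ supp x)`, so for a basis word `x` of weight 992 the
weight of `c + x` lies between 992 and 1000; the only admissible value is 992, which forces
`wt c = 1984` and `supp x ⊆ supp c`. Hence all of `C` lives on `supp c`, and every codeword other
than `0` and `c` has weight 992, because its weight and that of its sum with `c` add up to 1984.
The codewords vanishing at a fixed coordinate of `supp c` form a subspace of dimension at least 11
whose nonzero words all have weight 992. The `±1` sign vectors of its `2 ^ 11` words have Gram
matrix `1984 • 1 + 4 • J`, so they are linearly independent in `ℝ ^ 1988`, which is absurd.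
-/

open Finset Module

theorem ZMod.eq_zero_or_eq_one (a : ZMod 2) : a = 0 ∨ a = 1 := by decide +revert

section BinaryWords

variable {ι : Type*} [Fintype ι]

theorem two_mul_card_support_union (x y : ι → ZMod 2) :
    2 * #{i | x i ≠ 0 ∨ y i ≠ 0} = hammingNorm (x + y) + hammingNorm x + hammingNorm y := by
  simp only [hammingNorm, card_filter, mul_sum, ← sum_add_distrib, Pi.add_apply]
  refine sum_congr rfl fun i _ => ?_
  rcases (x i).eq_zero_or_eq_one with h | h <;> rcases (y i).eq_zero_or_eq_one with h' | h' <;>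
    simp [h, h', CharTwo.add_self_eq_zero]

theorem hammingNorm_le_card_support_union (x y : ι → ZMod 2) :
    hammingNorm x ≤ #{i | x i ≠ 0 ∨ y i ≠ 0} :=
  card_le_card <| monotone_filter_right _ fun _ _ => Or.inl

theorem card_support_union_eq_hammingNorm_iff (x y : ι → ZMod 2) :
    #{i | x i ≠ 0 ∨ y i ≠ 0} = hammingNorm x ↔ ∀ i, x i = 0 → y i = 0 := by
  have hsub : univ.filter (x · ≠ 0) ⊆ univ.filter fun i => x i ≠ 0 ∨ y i ≠ 0 :=
    monotone_filter_right _ fun _ _ => Or.inl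
  constructor
  · intro h i hi
    by_contra hyi
    have hmem : i ∈ univ.filter fun i => x i ≠ 0 ∨ y i ≠ 0 := by simp [hyi]
    rw [← eq_of_subset_of_card_le hsub h.le] at hmem
    simp [hi] at hmem
  · intro h
    exact congrArg card (filter_congr fun i _ => or_iff_left_of_imp (not_imp_not.2 (h i)))

def signVec (x : ι → ZMod 2) : ι → ℝ := fun i => if x i = 0 then 1 else -1

theorem signVec_dotProduct_signVec (x y : ι → ZMod 2) :
    signVec x ⬝ᵥ signVec y = Fintype.card ι - 2 * hammingDist x y := by
  rw [dotProduct, hammingDist, natCast_card_filter, ← card_univ, cast_card, mul_sum,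
    ← sum_sub_distrib]
  refine sum_congr rfl fun i _ => ?_
  rcases (x i).eq_zero_or_eq_one with h | h <;> rcases (y i).eq_zero_or_eq_one with h' | h' <;>
    norm_num [signVec, h, h']

theorem linearIndependent_signVec_of_hammingDist_eq {κ : Type*} [Fintype κ]
    {v : κ → ι → ZMod 2} {d : ℕ} (hd : 0 < d) (hdn : 2 * d ≤ Fintype.card ι)
    (hv : Pairwise fun a b => hammingDist (v a) (v b) = d) :
    LinearIndependent ℝ (signVec ∘ v) := by
  classical
  -- the Gram matrix is `2d • 1 + (n - 2d) • J`, a positive definite matrix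
  set n : ℝ := (Fintype.card ι : ℝ)
  have hdn' : (2 * d : ℝ) ≤ n := by unfold n; exact_mod_cast hdn
  have hgram : ∀ a b,
      signVec (v a) ⬝ᵥ signVec (v b) = (n - 2 * d) + if a = b then (2 * d : ℝ) else 0 := by
    intro a b
    rw [signVec_dotProduct_signVec]
    split_ifs with h
    · simp [n, h]
    · simp [n, hv h]
  rw [Fintype.linearIndependent_iff]
  intro t ht
  have hnorm : (∑ a, t a • signVec (v a)) ⬝ᵥ (∑ a, t a • signVec (v a))
      = (n - 2 * d) * (∑ a, t a) ^ 2 + 2 * d * ∑ a, t a ^ 2 := by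
    simp only [sum_dotProduct, dotProduct_sum, smul_dotProduct, dotProduct_smul, hgram,
      smul_eq_mul, mul_add, mul_ite, mul_zero, sum_add_distrib, sum_ite_eq', mem_univ, if_true,
      sq, sum_mul, mul_sum]
    congr 1
    · exact sum_congr rfl fun _ _ => sum_congr rfl fun _ _ => by ring
    · exact sum_congr rfl fun _ _ => by ring
  simp only [Function.comp_apply] at ht
  rw [ht, zero_dotProduct] at hnorm
  have h1 : 0 ≤ (n - 2 * d) * (∑ a, t a) ^ 2 := by
    have : 0 ≤ n - 2 * d := by linarith
    positivity
  have h2 : ∑ a, t a ^ 2 = 0 := by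
    have : (0 : ℝ) < d := by exact_mod_cast hd
    nlinarith [sum_nonneg fun a (_ : a ∈ univ) => sq_nonneg (t a)]
  intro a
  simpa using (sum_eq_zero_iff_of_nonneg fun a _ => sq_nonneg (t a)).mp h2 a (mem_univ a)

theorem two_pow_finrank_le_of_hammingNorm_eq (K : Submodule (ZMod 2) (ι → ZMod 2)) {d : ℕ}
    (hd : 0 < d) (hdn : 2 * d ≤ Fintype.card ι) (hK : ∀ x ∈ K, x ≠ 0 → hammingNorm x = d) :
    2 ^ finrank (ZMod 2) K ≤ Fintype.card ι := by
  classical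
  have hdist : Pairwise fun x y : K => hammingDist (x : ι → ZMod 2) y = d := fun x y hxy => by
    change hammingDist _ _ = d
    rw [hammingDist_eq_hammingNorm]
    exact hK _ (K.add_mem (K.neg_mem x.2) y.2)
      (neg_add_eq_zero.not.2 (Subtype.coe_injective.ne hxy))
  have := (linearIndependent_signVec_of_hammingDist_eq hd hdn hdist).fintype_card_le_finrank
  rwa [finrank_fintype_fun_eq_card, Module.card_eq_pow_finrank (K := ZMod 2), ZMod.card] at this

end BinaryWords

theorem Submodule.le_of_forall_basis_mem {R M κ : Type*} [Semiring R] [AddCommMonoid M]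
    [Module R M] {C P : Submodule R M} (b : Basis κ R C) (hb : ∀ i, (b i : M) ∈ P) : C ≤ P :=
  calc C = (span R (Set.range b)).map C.subtype := by
        rw [b.span_eq, Submodule.map_top, Submodule.range_subtype]
    _ = span R (Set.range (C.subtype ∘ b)) := by rw [Submodule.map_span, Set.range_comp]
    _ ≤ P := span_le.2 (Set.range_subset_iff.2 hb)

theorem Submodule.finrank_le_finrank_inf_ker_add_one {K V : Type*} [Field K] [AddCommGroup V]
    [Module K V] [FiniteDimensional K V] (C : Submodule K V) (f : V →ₗ[K] K) :
    finrank K C ≤ finrank K ↥(C ⊓ LinearMap.ker f) + 1 := by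
  have hsup := Submodule.finrank_sup_add_finrank_inf_eq C (LinearMap.ker f)
  have hnullity := LinearMap.finrank_range_add_finrank_ker f
  have hrange := Submodule.finrank_le (LinearMap.range f)
  have hle := Submodule.finrank_le (C ⊔ LinearMap.ker f)
  rw [finrank_self] at hrange
  omega

def admissibleWeights : Set ℕ :=
  {992, 1008, 1024, 1056, 1088, 1152, 1216, 1280, 1344, 1984, 1986, 1988}

section AdmissibleWeights

variable {C : Submodule (ZMod 2) (Fin 1988 → ZMod 2)} {c x : Fin 1988 → ZMod 2}

theorem hammingNorm_eq_1984_and_supported_of_large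
    (hwts : ∀ y ∈ C, y ≠ 0 → hammingNorm y ∈ admissibleWeights) (hc : c ∈ C) (hx : x ∈ C)
    (hc_large : 1984 ≤ hammingNorm c) (hx_wt : hammingNorm x = 992) :
    hammingNorm c = 1984 ∧ ∀ i, c i = 0 → x i = 0 := by
  have hcx : c + x ≠ 0 := CharTwo.add_eq_zero.not.2 fun h => by rw [h, hx_wt] at hc_large; omega
  have hS := hwts _ (C.add_mem hc hx) hcx
  simp only [admissibleWeights, Set.mem_insert_iff, Set.mem_singleton_iff] at hS
  have hunion := two_mul_card_support_union c x
  have hlower := hammingNorm_le_card_support_union c x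
  have hupper := card_le_univ (univ.filter fun i => c i ≠ 0 ∨ x i ≠ 0)
  rw [Fintype.card_fin] at hupper
  -- `wt (c + x) = 2 * #(supp c ∪ supp x) - wt c - 992 ≤ 1000`, and 992 is the only admissible
  -- weight in that range
  have h : #{i | c i ≠ 0 ∨ x i ≠ 0} = hammingNorm c ∧ hammingNorm c = 1984 := by omega
  exact ⟨h.2, (card_support_union_eq_hammingNorm_iff c x).1 h.1⟩

theorem hammingNorm_eq_992_of_supported
    (hwts : ∀ y ∈ C, y ≠ 0 → hammingNorm y ∈ admissibleWeights) (hc : c ∈ C) (hx : x ∈ C)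
    (hc_wt : hammingNorm c = 1984) (hsupp : ∀ i, c i = 0 → x i = 0) (hx0 : x ≠ 0)
    (hxc : x ≠ c) : hammingNorm x = 992 := by
  have hcx : c + x ≠ 0 := CharTwo.add_eq_zero.not.2 (Ne.symm hxc)
  have hS := hwts _ (C.add_mem hc hx) hcx
  have hSx := hwts x hx hx0
  simp only [admissibleWeights, Set.mem_insert_iff, Set.mem_singleton_iff] at hS hSx
  have hunion := two_mul_card_support_union c x
  rw [(card_support_union_eq_hammingNorm_iff c x).2 hsupp] at hunion
  omega

end AdmissibleWeights

/-- Exclusion of the large weights: if `C` is a 12-dimensional binary linear code of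
length 1988 whose nonzero codewords all have Hamming weight in
`{992, 1008, 1024, 1056, 1088, 1152, 1216, 1280, 1344, 1984, 1986, 1988}` and which has a
basis of codewords of weight exactly 992, then every nonzero codeword of `C` has Hamming
weight in `{992, 1008, 1024, 1056, 1088, 1152, 1216, 1280, 1344}`. -/
theorem exclude_large_weights
    (C : Submodule (ZMod 2) (Fin 1988 → ZMod 2))
    (hdim : Module.finrank (ZMod 2) C = 12)
    (hwts : ∀ c ∈ C, c ≠ 0 → hammingNorm c ∈
      ({992, 1008, 1024, 1056, 1088, 1152, 1216, 1280, 1344, 1984, 1986, 1988} : Set ℕ))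
    (hbasis : ∃ b : Module.Basis (Fin 12) (ZMod 2) C, ∀ i, hammingNorm ((b i : Fin 1988 → ZMod 2)) = 992) :
    ∀ c ∈ C, c ≠ 0 → hammingNorm c ∈
      ({992, 1008, 1024, 1056, 1088, 1152, 1216, 1280, 1344} : Set ℕ) := by
  obtain ⟨b, hb⟩ := hbasis
  intro c hc hc0
  by_contra hsmall
  have hlarge : 1984 ≤ hammingNorm c := by
    have := hwts c hc hc0
    simp only [Set.mem_insert_iff, Set.mem_singleton_iff] at this hsmall
    omega
  have hb_supp (j) := hammingNorm_eq_1984_and_supported_of_large hwts hc (b j).2 hlarge (hb j)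
  have hC : C ≤ Submodule.pi {i | c i = 0} fun _ => ⊥ :=
    Submodule.le_of_forall_basis_mem b fun j => by simpa using (hb_supp j).2
  obtain ⟨i₀, hi₀⟩ := Function.ne_iff.mp hc0
  let K := C ⊓ LinearMap.ker (LinearMap.proj i₀ : (Fin 1988 → ZMod 2) →ₗ[ZMod 2] ZMod 2)
  have hK : ∀ x ∈ K, x ≠ 0 → hammingNorm x = 992 := fun x hx hx0 =>
    hammingNorm_eq_992_of_supported hwts hc hx.1 (hb_supp 0).1 (by simpa using hC hx.1) hx0
      (by rintro rfl; exact hi₀ hx.2)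
  have hdimK : finrank (ZMod 2) C ≤ finrank (ZMod 2) K + 1 :=
    C.finrank_le_finrank_inf_ker_add_one _
  have hcard := two_pow_finrank_le_of_hammingNorm_eq K (by norm_num) (by simp) hK
  rw [Fintype.card_fin] at hcard
  have : 2 ^ 11 ≤ 2 ^ finrank (ZMod 2) K := Nat.pow_le_pow_right two_pos (by omega)
  omega
end

section
/- Infeasibility of the final weight distribution: there is no 12-dimensional F₂-linear subspace C of F₂^{1988} such that every nonzero codeword of C has Hamming weight in {992, 1008, 1024, 1056, 1088} and such that no coordinate position is zero on all of C (equivalently, the dual code C^⊥ with respect to the standard dot product contains no codeword of Hamming weight 1). -/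
private def eps (x : ZMod 2) : ℤ := 1 - 2 * x.val

private lemma eps_zero : eps 0 = 1 := by decide
private lemma eps_add : ∀ x y : ZMod 2, eps (x + y) = eps x * eps y := by decide
private lemma eps_add_one : ∀ x : ZMod 2, eps (x + 1) = - eps x := by decide
private lemma eps_sq : ∀ x : ZMod 2, eps x * eps x = 1 := by decide
private lemma one_sub_eps : ∀ x : ZMod 2, 1 - eps x = if x ≠ 0 then 2 else 0 := by decide

private lemma sum_zero_of_neg {G : Type*} [AddGroup G] [Fintype G] (c₀ : G) (f : G → ℤ)
    (h : ∀ c, f (c + c₀) = - f c) : ∑ c, f c = 0 := by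
  have := Fintype.sum_equiv (Equiv.addRight c₀) (fun c => f (c + c₀)) f (fun _ => rfl)
  simp only [h, Finset.sum_neg_distrib] at this
  omega


/-- Infeasibility of the final weight distribution: there is no 12-dimensional binary
linear code of length 1988 whose nonzero codewords all have Hamming weight in
`{992, 1008, 1024, 1056, 1088}` and which has no identically-zero coordinate position. -/
theorem no_final_weight_distribution :
    ¬ ∃ C : Submodule (ZMod 2) (Fin 1988 → ZMod 2),
        Module.finrank (ZMod 2) C = 12 ∧
        (∀ c ∈ C, c ≠ 0 → hammingNorm c ∈ ({992, 1008, 1024, 1056, 1088} : Set ℕ)) ∧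
        (∀ i : Fin 1988, ∃ c ∈ C, c i ≠ 0) := by
  classical
  rintro ⟨C, hrank, hw, hcov⟩
  haveI : Fintype C := Fintype.ofFinite C
  have hcard : Fintype.card C = 4096 := by
    rw [Module.card_eq_pow_finrank (K := ZMod 2), hrank]
    norm_num [ZMod.card]
  have hne1 : ∀ x : ZMod 2, x ≠ 0 → x = 1 := by decide
  set x : C → ℤ := fun c => ∑ i : Fin 1988, eps ((c : Fin 1988 → ZMod 2) i) with hxdef
  have hxc : ∀ c : C, x c = ∑ i : Fin 1988, eps ((c : Fin 1988 → ZMod 2) i) :=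
    fun c => by rw [hxdef]
  -- column sums vanish
  have colsum : ∀ i : Fin 1988, ∑ c : C, eps ((c : Fin 1988 → ZMod 2) i) = 0 := by
    intro i
    obtain ⟨v, hvC, hvi⟩ := hcov i
    refine sum_zero_of_neg (⟨v, hvC⟩ : C) _ ?_
    intro c
    have : ((c + ⟨v, hvC⟩ : C) : Fin 1988 → ZMod 2) i = (c : Fin 1988 → ZMod 2) i + 1 := by
      have : ((c + ⟨v, hvC⟩ : C) : Fin 1988 → ZMod 2) i
          = (c : Fin 1988 → ZMod 2) i + v i := rfl
      rw [this, hne1 _ hvi]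
    rw [this, eps_add_one]
  -- pair sums are nonnegative
  have pairsum : ∀ i j : Fin 1988,
      0 ≤ ∑ c : C, eps ((c : Fin 1988 → ZMod 2) i) * eps ((c : Fin 1988 → ZMod 2) j) := by
    intro i j
    by_cases h : ∀ c : C, (c : Fin 1988 → ZMod 2) i + (c : Fin 1988 → ZMod 2) j = 0
    · refine Finset.sum_nonneg fun c _ => ?_
      rw [← eps_add, h c, eps_zero]; norm_num
    · push_neg at h
      obtain ⟨c₀, hc₀⟩ := h
      have key : ∑ c : C,
          eps ((c : Fin 1988 → ZMod 2) i) * eps ((c : Fin 1988 → ZMod 2) j) = 0 := by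
        refine sum_zero_of_neg c₀ _ ?_
        intro c
        have h1 : ((c + c₀ : C) : Fin 1988 → ZMod 2) i
            = (c : Fin 1988 → ZMod 2) i + (c₀ : Fin 1988 → ZMod 2) i := rfl
        have h2 : ((c + c₀ : C) : Fin 1988 → ZMod 2) j
            = (c : Fin 1988 → ZMod 2) j + (c₀ : Fin 1988 → ZMod 2) j := rfl
        rw [h1, h2, ← eps_add, ← eps_add]
        have : (c : Fin 1988 → ZMod 2) i + (c₀ : Fin 1988 → ZMod 2) i +
            ((c : Fin 1988 → ZMod 2) j + (c₀ : Fin 1988 → ZMod 2) j)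
            = ((c : Fin 1988 → ZMod 2) i + (c : Fin 1988 → ZMod 2) j) + 1 := by
          rw [← hne1 _ hc₀]; ring
        rw [this, eps_add_one]
      rw [key]
  -- diagonal
  have diagsum : ∀ i : Fin 1988,
      ∑ c : C, eps ((c : Fin 1988 → ZMod 2) i) * eps ((c : Fin 1988 → ZMod 2) i) = 4096 := by
    intro i
    calc ∑ c : C, eps ((c : Fin 1988 → ZMod 2) i) * eps ((c : Fin 1988 → ZMod 2) i)
        = ∑ _c : C, (1 : ℤ) := Finset.sum_congr rfl fun c _ => eps_sq _
    _ = 4096 := by rw [Finset.sum_const, Finset.card_univ, hcard]; norm_num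
  -- first moment
  have sumx : ∑ c : C, x c = 0 := by
    have hsw : ∑ c : C, ∑ i : Fin 1988, eps ((c : Fin 1988 → ZMod 2) i)
        = ∑ i : Fin 1988, ∑ c : C, eps ((c : Fin 1988 → ZMod 2) i) := Finset.sum_comm
    calc ∑ c : C, x c = ∑ c : C, ∑ i : Fin 1988, eps ((c : Fin 1988 → ZMod 2) i) :=
          Finset.sum_congr rfl fun c _ => hxc c
    _ = 0 := by rw [hsw]; simp only [colsum, Finset.sum_const_zero]
  -- second moment lower bound
  have sumx2 : (8142848 : ℤ) ≤ ∑ c : C, (x c) ^ 2 := by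
    calc (8142848 : ℤ) = ∑ _i : Fin 1988, (4096 : ℤ) := by
          rw [Finset.sum_const, Finset.card_univ, Fintype.card_fin]; norm_num
    _ = ∑ i : Fin 1988, ∑ c : C,
          eps ((c : Fin 1988 → ZMod 2) i) * eps ((c : Fin 1988 → ZMod 2) i) :=
        Finset.sum_congr rfl fun i _ => (diagsum i).symm
    _ ≤ ∑ i : Fin 1988, ∑ j : Fin 1988, ∑ c : C,
        eps ((c : Fin 1988 → ZMod 2) i) * eps ((c : Fin 1988 → ZMod 2) j) := by
        refine Finset.sum_le_sum fun i _ => ?_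
        exact Finset.single_le_sum (fun j _ => pairsum i j) (Finset.mem_univ i)
    _ = ∑ c : C, (x c) ^ 2 := by
        have h1 : ∀ i : Fin 1988, ∑ j : Fin 1988, ∑ c : C,
            eps ((c : Fin 1988 → ZMod 2) i) * eps ((c : Fin 1988 → ZMod 2) j)
            = ∑ c : C, ∑ j : Fin 1988,
            eps ((c : Fin 1988 → ZMod 2) i) * eps ((c : Fin 1988 → ZMod 2) j) := fun i =>
          Finset.sum_comm
        have h2 : ∑ i : Fin 1988, ∑ c : C, ∑ j : Fin 1988,
            eps ((c : Fin 1988 → ZMod 2) i) * eps ((c : Fin 1988 → ZMod 2) j)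
            = ∑ c : C, ∑ i : Fin 1988, ∑ j : Fin 1988,
            eps ((c : Fin 1988 → ZMod 2) i) * eps ((c : Fin 1988 → ZMod 2) j) :=
          Finset.sum_comm
        calc ∑ i : Fin 1988, ∑ j : Fin 1988, ∑ c : C,
              eps ((c : Fin 1988 → ZMod 2) i) * eps ((c : Fin 1988 → ZMod 2) j)
            = ∑ c : C, ∑ i : Fin 1988, ∑ j : Fin 1988,
              eps ((c : Fin 1988 → ZMod 2) i) * eps ((c : Fin 1988 → ZMod 2) j) := by
              rw [← h2]; exact Finset.sum_congr rfl fun i _ => h1 i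
        _ = ∑ c : C, (x c) ^ 2 := Finset.sum_congr rfl fun c _ => by
              rw [hxc c, sq, Finset.sum_mul_sum]
  -- weight identity
  have hxw : ∀ c : C, x c = 1988 - 2 * (hammingNorm (c : Fin 1988 → ZMod 2) : ℤ) := by
    intro c
    have key : (1988 : ℤ) - x c = ∑ i : Fin 1988, (1 - eps ((c : Fin 1988 → ZMod 2) i)) := by
      rw [hxc c]
      rw [Finset.sum_sub_distrib, Finset.sum_const, Finset.card_univ, Fintype.card_fin]
      norm_num
    have hcount : (hammingNorm (c : Fin 1988 → ZMod 2) : ℤ)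
        = ∑ i : Fin 1988, (if (c : Fin 1988 → ZMod 2) i ≠ 0 then (1 : ℤ) else 0) := by
      rw [hammingNorm, Finset.card_filter]
      push_cast [apply_ite (Nat.cast : ℕ → ℤ)]
      rfl
    have h2 : ∑ i : Fin 1988, (1 - eps ((c : Fin 1988 → ZMod 2) i))
        = 2 * (hammingNorm (c : Fin 1988 → ZMod 2) : ℤ) := by
      rw [hcount, Finset.mul_sum]
      refine Finset.sum_congr rfl fun i _ => ?_
      rw [one_sub_eps]
      split <;> norm_num
    omega
  -- x at 0
  have hx0 : x (0 : C) = 1988 := by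
    rw [hxc 0]
    calc ∑ i : Fin 1988, eps (((0 : C) : Fin 1988 → ZMod 2) i)
        = ∑ _i : Fin 1988, (1 : ℤ) := Finset.sum_congr rfl fun i _ => by
          rw [show ((0 : C) : Fin 1988 → ZMod 2) i = 0 from rfl, eps_zero]
    _ = 1988 := by rw [Finset.sum_const, Finset.card_univ, Fintype.card_fin]; norm_num
  -- pointwise bound on nonzero codewords
  have hbd : ∀ c : C, c ≠ 0 → (x c) ^ 2 ≤ -184 * x c + 752 := by
    intro c hc
    have hc' : (c : Fin 1988 → ZMod 2) ≠ 0 := by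
      simpa using hc
    have hmem := hw (c : Fin 1988 → ZMod 2) c.2 hc'
    simp only [Set.mem_insert_iff, Set.mem_singleton_iff] at hmem
    have hx := hxw c
    rcases hmem with h | h | h | h | h <;> rw [h] at hx <;> rw [hx] <;> norm_num
  -- combine
  have splitx : ∑ c : C, x c = x 0 + ∑ c ∈ Finset.univ.erase 0, x c :=
    (Finset.add_sum_erase _ _ (Finset.mem_univ 0)).symm
  have splitx2 : ∑ c : C, (x c) ^ 2 = (x 0) ^ 2 + ∑ c ∈ Finset.univ.erase 0, (x c) ^ 2 :=
    (Finset.add_sum_erase _ _ (Finset.mem_univ 0)).symm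
  have cardE : (Finset.univ.erase (0 : C)).card = 4095 := by
    rw [Finset.card_erase_of_mem (Finset.mem_univ 0), Finset.card_univ, hcard]
  have hsum2 : ∑ c ∈ Finset.univ.erase (0 : C), (x c) ^ 2
      ≤ -184 * (∑ c ∈ Finset.univ.erase 0, x c) + 752 * 4095 := by
    calc ∑ c ∈ Finset.univ.erase (0 : C), (x c) ^ 2
        ≤ ∑ c ∈ Finset.univ.erase (0 : C), (-184 * x c + 752) :=
          Finset.sum_le_sum fun c hc => hbd c (Finset.ne_of_mem_erase hc)
    _ = -184 * (∑ c ∈ Finset.univ.erase 0, x c) + 752 * 4095 := by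
          rw [Finset.sum_add_distrib, Finset.sum_const, cardE, Finset.mul_sum]
          norm_num
  rw [splitx, hx0] at sumx
  rw [splitx2, hx0] at sumx2
  have hE : ∑ c ∈ Finset.univ.erase (0 : C), x c = -1988 := by linarith
  rw [hE] at hsum2
  linarith
end

section
/- There is no 10-dimensional F₂-linear subspace of F₂^{324} in which every nonzero codeword has Hamming weight exactly 160. -/
open Finset

/-- There is no 10-dimensional binary linear code of length 324 in which every nonzero
codeword has Hamming weight exactly 160. -/
theorem no_constant_weight_code_324 :
    ¬ ∃ C : Submodule (ZMod 2) (Fin 324 → ZMod 2),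
        Module.finrank (ZMod 2) C = 10 ∧
        (∀ c ∈ C, c ≠ 0 → hammingNorm c = 160) := by
  rintro ⟨C, hrank, hw⟩
  classical
  haveI : Fintype C := Fintype.ofFinite C
  have hcard : Fintype.card C = 1024 := by
    rw [Module.card_eq_pow_finrank (K := ZMod 2) (V := C), hrank, ZMod.card]; norm_num
  have hsum1 : ∑ c : C, hammingNorm (c : Fin 324 → ZMod 2) = 1023 * 160 := by
    have h1 : ∀ c : C, hammingNorm (c : Fin 324 → ZMod 2)
        = if c = 0 then 0 else 160 := by
      intro c
      by_cases h : c = 0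
      · simp [h, hammingNorm]
      · have hne : (c : Fin 324 → ZMod 2) ≠ 0 := by
          simpa [Submodule.coe_eq_zero] using h
        simp [h, hw c c.2 hne]
    rw [Finset.sum_congr rfl fun c _ => h1 c, Finset.sum_ite, Finset.sum_const,
      Finset.sum_const]
    have h2 : (univ.filter fun c : C => ¬ c = 0).card = 1023 := by
      rw [Finset.filter_not, Finset.card_sdiff_of_subset (Finset.filter_subset _ _),
        Finset.filter_eq']
      simp [hcard]
    rw [h2]; simp [Nat.mul_comm]
  -- swap sum: total = ∑ over coordinates of fiber counts
  have hsum2 : ∑ c : C, hammingNorm (c : Fin 324 → ZMod 2)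
      = ∑ i : Fin 324, (univ.filter fun c : C => (c : Fin 324 → ZMod 2) i ≠ 0).card := by
    simp only [hammingNorm, Finset.card_filter]
    rw [Finset.sum_comm]
  -- each coordinate count divisible by 512
  have hdvd : ∀ i : Fin 324,
      (512 : ℕ) ∣ (univ.filter fun c : C => (c : Fin 324 → ZMod 2) i ≠ 0).card := by
    intro i
    by_cases hex : ∃ c₀ : C, (c₀ : Fin 324 → ZMod 2) i ≠ 0
    · obtain ⟨c₀, hc₀⟩ := hex
      have hbij : (univ.filter fun c : C => (c : Fin 324 → ZMod 2) i = 0).card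
          = (univ.filter fun c : C => (c : Fin 324 → ZMod 2) i ≠ 0).card := by
        apply Finset.card_bij (fun c _ => c + c₀)
        · intro a ha
          simp only [Finset.mem_filter, Finset.mem_univ, true_and] at ha ⊢
          have : ((a + c₀ : C) : Fin 324 → ZMod 2) i = (a : Fin 324 → ZMod 2) i + (c₀ : Fin 324 → ZMod 2) i := rfl
          rw [this, ha, zero_add]; exact hc₀
        · intro a ha b hb hab
          exact add_right_cancel hab
        · intro b hb
          have hcc : c₀ + c₀ = 0 := by
            rw [← two_smul (ZMod 2)]
            simp [(by decide : (2 : ZMod 2) = 0)]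
          refine ⟨b + c₀, ?_, by rw [add_assoc, hcc, add_zero]⟩
          simp only [Finset.mem_filter, Finset.mem_univ, true_and] at hb ⊢
          have lem : ∀ x : ZMod 2, x ≠ 0 → x = 1 := by decide
          have hkey : ((b + c₀ : C) : Fin 324 → ZMod 2) i = (b : Fin 324 → ZMod 2) i + (c₀ : Fin 324 → ZMod 2) i := rfl
          rw [hkey, lem _ hb, lem _ hc₀]
          decide
      have hsplit : (univ.filter fun c : C => (c : Fin 324 → ZMod 2) i = 0).card
          + (univ.filter fun c : C => (c : Fin 324 → ZMod 2) i ≠ 0).card = 1024 := by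
        rw [Finset.card_filter_add_card_filter_not]
        simpa using hcard
      rw [hbij] at hsplit
      have : (univ.filter fun c : C => (c : Fin 324 → ZMod 2) i ≠ 0).card = 512 := by omega
      rw [this]
    · push_neg at hex
      have : (univ.filter fun c : C => (c : Fin 324 → ZMod 2) i ≠ 0) = ∅ :=
        Finset.filter_eq_empty_iff.mpr (by intro c _; simp [hex c])
      rw [this]; simp
  have : (512 : ℕ) ∣ 1023 * 160 := by
    rw [← hsum1, hsum2]
    exact Finset.dvd_sum fun i _ => hdvd i
  norm_num at this
end

section
/- There is no 10-dimensional F₂-linear subspace of F₂^{356} in which every nonzero codeword has Hamming weight in {176, 192}. -/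
open Finset

namespace NoTwoWeightAux

/-- The quadratic character of `ZMod 2` into `ℤ`. -/
def χ (x : ZMod 2) : ℤ := if x = 0 then 1 else -1

lemma χ_zero : χ 0 = 1 := rfl

lemma χ_add : ∀ x y : ZMod 2, χ (x + y) = χ x * χ y := by decide

lemma χ_one_add : ∀ x : ZMod 2, χ (1 + x) = - χ x := by decide

/-- Character sum over a finite `F₂`-"linear" domain is nonnegative (it is `0` or `|V|`). -/
lemma sum_χ_nonneg {V : Type*} [AddCommGroup V] [Fintype V] (f : V → ZMod 2)
    (hf : ∀ x y, f (x + y) = f x + f y) : 0 ≤ ∑ c : V, χ (f c) := by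
  by_cases h : ∃ c₀, f c₀ = 1
  · obtain ⟨c₀, hc₀⟩ := h
    have key : ∑ c : V, χ (f (c₀ + c)) = ∑ c : V, χ (f c) :=
      Fintype.sum_equiv (Equiv.addLeft c₀) _ _ (fun c => rfl)
    have key2 : ∑ c : V, χ (f (c₀ + c)) = - ∑ c : V, χ (f c) := by
      rw [← Finset.sum_neg_distrib]
      refine Finset.sum_congr rfl fun c _ => ?_
      rw [hf, hc₀, χ_one_add]
    have : ∑ c : V, χ (f c) = 0 := by linarith [key.symm.trans key2]
    rw [this]
  · push_neg at h
    have hz : ∀ c, χ (f c) = 1 := by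
      intro c
      have h1 := h c
      have : f c = 0 := by revert h1; generalize f c = x; revert x; decide
      rw [this]; rfl
    simp [hz]

lemma sum_χ_eq {n : ℕ} (c : Fin n → ZMod 2) :
    ∑ i, χ (c i) = (n : ℤ) - 2 * (hammingNorm c : ℤ) := by
  have h : ∀ i, χ (c i) = 1 - 2 * (if c i ≠ 0 then (1 : ℤ) else 0) := by
    intro i; by_cases h : c i = 0 <;> simp [χ, h]
  rw [Finset.sum_congr rfl fun i _ => h i, Finset.sum_sub_distrib, ← Finset.mul_sum]
  simp [hammingNorm, Finset.sum_ite, Finset.filter_eq']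

end NoTwoWeightAux

open NoTwoWeightAux

/-- There is no 10-dimensional binary linear code of length 356 in which every nonzero
codeword has Hamming weight 176 or 192. -/
theorem no_two_weight_code_356 :
    ¬ ∃ C : Submodule (ZMod 2) (Fin 356 → ZMod 2),
        Module.finrank (ZMod 2) C = 10 ∧
        (∀ c ∈ C, c ≠ 0 → hammingNorm c ∈ ({176, 192} : Set ℕ)) := by
  classical
  rintro ⟨C, hrank, hw⟩
  haveI : Fintype C := Fintype.ofFinite C
  have hcard : Fintype.card C = 1024 := by
    have h := Module.card_eq_pow_finrank (K := ZMod 2) (V := C)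
    rw [hrank, ZMod.card] at h
    norm_num at h
    exact h
  -- weight classification of elements of C
  have hclass : ∀ c : C, (c : Fin 356 → ZMod 2) = 0 ∨
      hammingNorm (c : Fin 356 → ZMod 2) = 176 ∨ hammingNorm (c : Fin 356 → ZMod 2) = 192 := by
    intro c
    by_cases h : (c : Fin 356 → ZMod 2) = 0
    · exact Or.inl h
    · have := hw c c.2 h
      simpa using Or.inr this
  set A : Finset C := univ.filter (fun c : C => hammingNorm (c : Fin 356 → ZMod 2) = 176) with hA
  set B : Finset C := univ.filter (fun c : C => hammingNorm (c : Fin 356 → ZMod 2) = 192) with hB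
  set a : ℤ := (A.card : ℤ)
  set b : ℤ := (B.card : ℤ)
  have hz : ∀ c : C, (c : Fin 356 → ZMod 2) = 0 ↔ c = 0 := by
    intro c; exact ⟨fun h => Subtype.ext h, fun h => by rw [h]; rfl⟩
  -- generic counting of a sum of a function constant on the weight classes
  have count : ∀ (v0 v1 v2 : ℤ) (F : C → ℤ),
      (∀ c : C, F c = (if hammingNorm (c : Fin 356 → ZMod 2) = 176 then v1 else 0)
        + (if hammingNorm (c : Fin 356 → ZMod 2) = 192 then v2 else 0)
        + (if c = 0 then v0 else 0)) →
      ∑ c : C, F c = v1 * a + v2 * b + v0 := by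
    intro v0 v1 v2 F hF
    rw [Finset.sum_congr rfl fun c _ => hF c]
    rw [Finset.sum_add_distrib, Finset.sum_add_distrib]
    congr 1
    · congr 1
      · rw [← Finset.sum_filter]
        simp [← hA, a, mul_comm]
      · rw [← Finset.sum_filter]
        simp [← hB, b, mul_comm]
    · simp
  have h176 : hammingNorm (((0 : C) : Fin 356 → ZMod 2)) = 0 := by
    simp
  -- the three counting identities
  have hcount1 : ∑ c : C, (1 : ℤ) = 1 * a + 1 * b + 1 := by
    apply count
    intro c
    rcases hclass c with h | h | h
    · rw [(hz c).mp h]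
      simp [h176]
    · have hne : c ≠ 0 := by
        intro h0; rw [h0] at h; rw [h176] at h; exact absurd h (by norm_num)
      simp [h, hne]
    · have hne : c ≠ 0 := by
        intro h0; rw [h0] at h; rw [h176] at h; exact absurd h (by norm_num)
      have : hammingNorm (c : Fin 356 → ZMod 2) ≠ 176 := by rw [h]; norm_num
      simp [h, hne, this]
  have hab : a + b = 1023 := by
    have : ∑ c : C, (1 : ℤ) = 1024 := by simp [hcard]
    rw [hcount1] at this; linarith
  -- T1
  have hT1val : ∑ c : C, ((356 : ℤ) - 2 * (hammingNorm (c : Fin 356 → ZMod 2) : ℤ))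
      = 4 * a + (-28) * b + 356 := by
    apply count
    intro c
    rcases hclass c with h | h | h
    · rw [(hz c).mp h]
      simp [h176]
    · have hne : c ≠ 0 := by
        intro h0; rw [h0] at h; rw [h176] at h; exact absurd h (by norm_num)
      simp [h, hne]
    · have hne : c ≠ 0 := by
        intro h0; rw [h0] at h; rw [h176] at h; exact absurd h (by norm_num)
      have h' : hammingNorm (c : Fin 356 → ZMod 2) ≠ 176 := by rw [h]; norm_num
      rw [h]
      simp [h', hne]
  have hT2val : ∑ c : C, ((356 : ℤ) - 2 * (hammingNorm (c : Fin 356 → ZMod 2) : ℤ))^2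
      = 16 * a + 784 * b + 126736 := by
    apply count
    intro c
    rcases hclass c with h | h | h
    · rw [(hz c).mp h]
      simp [h176]
    · have hne : c ≠ 0 := by
        intro h0; rw [h0] at h; rw [h176] at h; exact absurd h (by norm_num)
      rw [h]; simp [hne]
    · have hne : c ≠ 0 := by
        intro h0; rw [h0] at h; rw [h176] at h; exact absurd h (by norm_num)
      have h' : hammingNorm (c : Fin 356 → ZMod 2) ≠ 176 := by rw [h]; norm_num
      rw [h]; simp [h', hne]
  -- character-sum lower bounds
  have hlin : ∀ i j : Fin 356, ∀ x y : C,
      ((x + y : C) : Fin 356 → ZMod 2) i + ((x + y : C) : Fin 356 → ZMod 2) j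
      = ((x : Fin 356 → ZMod 2) i + (x : Fin 356 → ZMod 2) j)
        + ((y : Fin 356 → ZMod 2) i + (y : Fin 356 → ZMod 2) j) := by
    intro i j x y
    simp [Submodule.coe_add]
    ring
  have hsum356 : ∀ c : C, ((356 : ℤ) - 2 * (hammingNorm (c : Fin 356 → ZMod 2) : ℤ))
      = ∑ i, χ ((c : Fin 356 → ZMod 2) i) := by
    intro c
    have h := sum_χ_eq ((c : Fin 356 → ZMod 2))
    push_cast at h
    linarith
  have hT1 : (0 : ℤ) ≤ ∑ c : C, ((356 : ℤ) - 2 * (hammingNorm (c : Fin 356 → ZMod 2) : ℤ)) := by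
    rw [Finset.sum_congr rfl fun c _ => hsum356 c, Finset.sum_comm]
    apply Finset.sum_nonneg
    intro i _
    exact sum_χ_nonneg (fun c : C => (c : Fin 356 → ZMod 2) i)
      (fun x y => by simp [Submodule.coe_add])
  have hT2 : (364544 : ℤ) ≤ ∑ c : C, ((356 : ℤ) - 2 * (hammingNorm (c : Fin 356 → ZMod 2) : ℤ))^2 := by
    have hrw : ∀ c : C, ((356 : ℤ) - 2 * (hammingNorm (c : Fin 356 → ZMod 2) : ℤ))^2
        = ∑ i, ∑ j, χ ((c : Fin 356 → ZMod 2) i + (c : Fin 356 → ZMod 2) j) := by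
      intro c
      rw [hsum356, sq, Finset.sum_mul_sum]
      exact Finset.sum_congr rfl fun i _ => Finset.sum_congr rfl fun j _ => (χ_add _ _).symm
    rw [Finset.sum_congr rfl fun c _ => hrw c, Finset.sum_comm]
    rw [Finset.sum_congr rfl fun i _ => Finset.sum_comm]
    have hinner : ∀ i : Fin 356,
        (1024 : ℤ) ≤ ∑ j, ∑ c : C, χ ((c : Fin 356 → ZMod 2) i + (c : Fin 356 → ZMod 2) j) := by
      intro i
      have hdiag : ∑ c : C, χ ((c : Fin 356 → ZMod 2) i + (c : Fin 356 → ZMod 2) i) = 1024 := by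
        have : ∀ c : C, χ ((c : Fin 356 → ZMod 2) i + (c : Fin 356 → ZMod 2) i) = 1 := by
          intro c
          have h2 : (c : Fin 356 → ZMod 2) i + (c : Fin 356 → ZMod 2) i = 0 := by
            generalize (c : Fin 356 → ZMod 2) i = x; revert x; decide
          rw [h2]; rfl
        rw [Finset.sum_congr rfl fun c _ => this c, Finset.sum_const, Finset.card_univ, hcard]
        norm_num
      calc (1024 : ℤ) = ∑ c : C, χ ((c : Fin 356 → ZMod 2) i + (c : Fin 356 → ZMod 2) i) :=
            hdiag.symm
        _ ≤ ∑ j, ∑ c : C, χ ((c : Fin 356 → ZMod 2) i + (c : Fin 356 → ZMod 2) j) := by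
            apply Finset.single_le_sum (f := fun j =>
              ∑ c : C, χ ((c : Fin 356 → ZMod 2) i + (c : Fin 356 → ZMod 2) j))
            · intro j _
              exact sum_χ_nonneg _ (hlin i j)
            · exact Finset.mem_univ i
    calc (364544 : ℤ) = ∑ _i : Fin 356, (1024 : ℤ) := by
          rw [Finset.sum_const, Finset.card_univ, Fintype.card_fin]
          norm_num
      _ ≤ _ := Finset.sum_le_sum fun i _ => hinner i
    -- swap inner sums: need ∑ i ∑ c ∑ j vs ∑ i ∑ j ∑ c
  linarith [hT1, hT2, hT1val, hT2val, hab]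
end

section
/- There is no 11-dimensional F₂-linear subspace of F₂^{836} in which every nonzero codeword has Hamming weight in {416, 448}. -/
/-!
Let `m` be the number of coordinates on which `C` is not identically zero and `S` the number of
ordered pairs of such coordinates that agree on `C`. Every fibre of one nonzero coordinate
functional, or of two distinct ones, has the same size, which gives the first two power moments
`∑ wt c = |C| m / 2` and `∑ (wt c)² = |C| (m² + S) / 4`, where `S ≥ m`. If every nonzero weight is
`a` or `b`, then `∑ (wt c - a) (wt c - b) = a b`, as only the zero word contributes. For
`|C| = 2¹¹`, `a = 416`, `b = 448` this forces `m² - 1727 m + 745108 ≤ 0`, i.e. `m ≥ 841 > 836`.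
-/

open Finset Function

section Fibers

variable {V W F : Type*} [AddGroup V] [Fintype V] [AddMonoid W] [Fintype W] [DecidableEq W]
  [FunLike F V W] [AddMonoidHomClass F V W]

theorem card_mul_card_fiber_of_surjective (φ : F) (hφ : Surjective φ) (w : W) :
    Fintype.card W * #{v | φ v = w} = Fintype.card V := by
  calc Fintype.card W * #{v | φ v = w}
      = ∑ w', #{v | φ v = w'} := by
        simp [AddMonoidHom.card_fiber_eq_of_mem_range φ (hφ _) (hφ w)]
    _ = Fintype.card V := (card_eq_sum_card_fiberwise fun _ _ ↦ mem_univ _).symm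

end Fibers

namespace ZMod

theorem ne_zero_iff_eq_one_of_two (a : ZMod 2) : a ≠ 0 ↔ a = 1 := by
  decide +revert

theorem exists_smul_add_smul_add_smul_eq (a b : ZMod 2) {c d : ZMod 2} (hcd : c ≠ d)
    (s t : ZMod 2) :
    ∃ α β γ : ZMod 2, α • ((1 : ZMod 2), a) + β • (b, 1) + γ • (c, d) = (s, t) := by
  decide +revert

end ZMod

namespace LinearMap

variable {V : Type*} [AddCommGroup V] [Module (ZMod 2) V]

theorem surjective_prod_of_ne {f g : V →ₗ[ZMod 2] ZMod 2} (hf : f ≠ 0) (hg : g ≠ 0)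
    (hfg : f ≠ g) : Surjective (f.prod g) := by
  obtain ⟨x, hx⟩ := surjective_of_ne_zero hf 1
  obtain ⟨y, hy⟩ := surjective_of_ne_zero hg 1
  obtain ⟨z, hz⟩ : ∃ z, f z ≠ g z := not_forall.mp (mt LinearMap.ext hfg)
  rintro ⟨s, t⟩
  obtain ⟨α, β, γ, h⟩ := ZMod.exists_smul_add_smul_add_smul_eq (g x) (f y) hz s t
  exact ⟨α • x + β • y + γ • z, by simp [← h, hx, hy]⟩

variable [Fintype V]

theorem two_mul_card_apply_ne_zero {f : V →ₗ[ZMod 2] ZMod 2} (hf : f ≠ 0) :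
    2 * #{v | f v ≠ 0} = Fintype.card V := by
  simpa [ZMod.ne_zero_iff_eq_one_of_two] using
    card_mul_card_fiber_of_surjective f (surjective_of_ne_zero hf) 1

open Classical in
theorem four_mul_card_apply_ne_zero_and (f g : V →ₗ[ZMod 2] ZMod 2) :
    4 * #{v | f v ≠ 0 ∧ g v ≠ 0} =
      Fintype.card V * ((if f ≠ 0 ∧ g ≠ 0 then 1 else 0) + if f ≠ 0 ∧ f = g then 1 else 0) := by
  by_cases hf : f = 0
  · simp [hf]
  by_cases hg : g = 0
  · simp [hg]
  by_cases hfg : f = g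
  · subst hfg
    simp only [and_self, hf, ne_eq, not_false_eq_true, if_true]
    rw [← two_mul_card_apply_ne_zero hf]
    ring
  · simpa [hf, hg, hfg, ZMod.ne_zero_iff_eq_one_of_two, Prod.ext_iff] using
      card_mul_card_fiber_of_surjective (f.prod g) (surjective_prod_of_ne hf hg hfg) (1, 1)

end LinearMap

namespace BinaryCode

variable {ι : Type*} (C : Submodule (ZMod 2) (ι → ZMod 2))

def coord (i : ι) : C →ₗ[ZMod 2] ZMod 2 := LinearMap.proj i ∘ₗ C.subtype

variable [Fintype ι]

open Classical in
noncomputable def support : Finset ι := {i | coord C i ≠ 0}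

open Classical in
noncomputable def equalCoordPairs : Finset (ι × ι) :=
  {p | coord C p.1 ≠ 0 ∧ coord C p.1 = coord C p.2}

theorem card_support_le_card_equalCoordPairs : #(support C) ≤ #(equalCoordPairs C) :=
  card_le_card_of_injOn (fun i ↦ (i, i)) (fun i hi ↦ by simpa [support, equalCoordPairs] using hi)
    fun _ _ _ _ h ↦ (Prod.mk.inj h).1

variable [Fintype C]

theorem sum_hammingNorm :
    ∑ c : C, hammingNorm (c : ι → ZMod 2) = ∑ i, #{c : C | coord C i c ≠ 0} :=
  sum_card_bipartiteAbove_eq_sum_card_bipartiteBelow fun (c : C) i ↦ (c : ι → ZMod 2) i ≠ 0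

theorem sum_hammingNorm_sq :
    ∑ c : C, hammingNorm (c : ι → ZMod 2) ^ 2 =
      ∑ i, ∑ j, #{c : C | coord C i c ≠ 0 ∧ coord C j c ≠ 0} := by
  rw [← Fintype.sum_prod_type']
  refine Eq.trans (sum_congr rfl fun c _ ↦ ?_) (sum_card_bipartiteAbove_eq_sum_card_bipartiteBelow
    fun (c : C) (p : ι × ι) ↦ (c : ι → ZMod 2) p.1 ≠ 0 ∧ (c : ι → ZMod 2) p.2 ≠ 0)
  rw [hammingNorm, sq, ← card_product, ← filter_product]
  rfl

theorem two_mul_sum_hammingNorm :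
    2 * ∑ c : C, hammingNorm (c : ι → ZMod 2) = Fintype.card C * #(support C) := by
  classical
  rw [sum_hammingNorm, mul_sum, support, card_filter, mul_sum]
  refine sum_congr rfl fun i _ ↦ ?_
  split_ifs with hi
  · simpa using LinearMap.two_mul_card_apply_ne_zero hi
  · simp [not_not.mp hi]

theorem four_mul_sum_hammingNorm_sq :
    4 * ∑ c : C, hammingNorm (c : ι → ZMod 2) ^ 2 =
      Fintype.card C * (#(support C) ^ 2 + #(equalCoordPairs C)) := by
  classical
  have hsupport : #(support C) ^ 2 = ∑ i, ∑ j, if coord C i ≠ 0 ∧ coord C j ≠ 0 then 1 else 0 := by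
    simp only [sq, support, card_filter, sum_mul_sum, ite_zero_mul_ite_zero, mul_one]
  have hpairs : #(equalCoordPairs C) =
      ∑ i, ∑ j, if coord C i ≠ 0 ∧ coord C i = coord C j then 1 else 0 := by
    simp only [equalCoordPairs, card_filter, Fintype.sum_prod_type]
    congr! 3
  simp only [sum_hammingNorm_sq, mul_sum, LinearMap.four_mul_card_apply_ne_zero_and, hsupport,
    hpairs, ← sum_add_distrib]

theorem sum_hammingNorm_sq_add {a b : ℕ}
    (hw : ∀ c ∈ C, c ≠ 0 → hammingNorm c = a ∨ hammingNorm c = b) :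
    ∑ c : C, hammingNorm (c : ι → ZMod 2) ^ 2 + a * b * Fintype.card C =
      (a + b) * ∑ c : C, hammingNorm (c : ι → ZMod 2) + a * b := by
  classical
  calc ∑ c : C, hammingNorm (c : ι → ZMod 2) ^ 2 + a * b * Fintype.card C
      = ∑ c : C, ((a + b) * hammingNorm (c : ι → ZMod 2) + if c = 0 then a * b else 0) := by
        rw [← card_univ, mul_comm, ← smul_eq_mul, ← sum_const, ← sum_add_distrib]
        refine sum_congr rfl fun c _ ↦ ?_
        by_cases hc : c = 0
        · simp [hc]
        · rcases hw c c.2 (by simpa using hc) with h | h <;> simp [hc, h] <;> ring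
    _ = (a + b) * ∑ c : C, hammingNorm (c : ι → ZMod 2) + a * b := by
        simp [sum_add_distrib, mul_sum]

end BinaryCode

/-- There is no 11-dimensional binary linear code of length 836 in which every nonzero
codeword has Hamming weight 416 or 448. -/
theorem no_two_weight_code_836 :
    ¬ ∃ C : Submodule (ZMod 2) (Fin 836 → ZMod 2),
        Module.finrank (ZMod 2) C = 11 ∧
        (∀ c ∈ C, c ≠ 0 → hammingNorm c ∈ ({416, 448} : Set ℕ)) := by
  rintro ⟨C, hdim, hw⟩
  have : Fintype C := Fintype.ofFinite C
  have hcard : Fintype.card C = 2048 := by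
    rw [Module.card_eq_pow_finrank (K := ZMod 2), hdim, ZMod.card]; rfl
  have h1 := BinaryCode.two_mul_sum_hammingNorm C
  have h2 := BinaryCode.four_mul_sum_hammingNorm_sq C
  have h3 := BinaryCode.sum_hammingNorm_sq_add C hw
  have hS := BinaryCode.card_support_le_card_equalCoordPairs C
  have hm : #(BinaryCode.support C) ≤ 836 := card_le_univ _ |>.trans_eq (Fintype.card_fin _)
  rw [hcard] at h1 h2 h3
  zify at *
  nlinarith [mul_nonneg (sub_nonneg.mpr hm) (by linarith : (0 : ℤ) ≤ 891 - #(BinaryCode.support C))]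
end
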